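/- Let σ>0, C>0 and A<0 with A+C>0, and set ρ_{L,0} = 1 − C/√L, ρ_{L,1} = 1 − A/√L (so ρ_{L,1} > 1). Let D_L = (ρ_{L,1} − ρ_{L,1}^{−1}) · (ρ_{L,1} + ρ_{L,1}^{−1} + σ)^L / [(ρ_{L,1} − ρ_{L,0})(1 − ρ_{L,0}ρ_{L,1})]. Then lim_{L→∞} D_L / ((2+σ)^L √L) = 2A e^{A²/(2+σ)} / (A² − C²). -/

import Mathlib

/-!
Write `ρ₁ = 1 - A/√L`, `ρ₀ = 1 - C/√L` and `u = 1/√L`. The quotient splits as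
`[(ρ₁ - ρ₁⁻¹) / ((ρ₁ - ρ₀)(1 - ρ₀ρ₁)) · u] · ((ρ₁ + ρ₁⁻¹ + σ)/(2 + σ))^L`.
Since `ρ₁ - ρ₀ = (C - A)u` and `1 - ρ₀ρ₁ = u(A + C - ACu)`, the first factor is a rational function
of `u` regular at `0`, with value `-2A/((C - A)(A + C))`. Since `ρ + ρ⁻¹ - 2 = (ρ - 1)²/ρ` and
`(ρ₁ - 1)² = A²/L`, the second factor is `(1 + x_L)^L` with `L x_L → A²/(2 + σ)`.
-/

open Real Filter Topology

lemma tendsto_prefactor_nhdsGT_zero {A C : ℝ} (hAC : A ≠ C) (hAC' : A + C ≠ 0) :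
    Tendsto (fun u : ℝ => ((1 - A * u) - (1 - A * u)⁻¹) /
        (((1 - A * u) - (1 - C * u)) * (1 - (1 - C * u) * (1 - A * u))) * u)
      (𝓝[>] 0) (𝓝 (2 * A / (A ^ 2 - C ^ 2))) := by
  set g : ℝ → ℝ := fun u => -A * (2 - A * u) / ((1 - A * u) * (C - A) * (A + C - A * C * u))
  have hCA : C - A ≠ 0 := sub_ne_zero.mpr hAC.symm
  have hρ : ContinuousAt (fun u : ℝ => 1 - A * u) 0 := by fun_prop
  have hq : ContinuousAt (fun u : ℝ => A + C - A * C * u) 0 := by fun_prop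
  have hg : ContinuousAt g 0 :=
    (continuousAt_const.mul (by fun_prop)).div ((hρ.mul continuousAt_const).mul hq)
      (by simp [hCA, hAC'])
  have hg0 : g 0 = 2 * A / (A ^ 2 - C ^ 2) := by
    have : A ^ 2 - C ^ 2 = -((C - A) * (A + C)) := by ring
    simp only [g, mul_zero, sub_zero, this]
    field_simp
  rw [← hg0]
  refine (hg.tendsto.mono_left nhdsWithin_le_nhds).congr' ?_
  filter_upwards [self_mem_nhdsWithin, nhdsWithin_le_nhds (hρ.eventually_ne (y := 0) (by simp)),
    nhdsWithin_le_nhds (hq.eventually_ne (y := 0) (by simpa using hAC'))] with u hu hρu hqu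
  have hu0 : u ≠ 0 := hu.ne'
  simp only [g]
  rw [show (1 - A * u) - (1 - C * u) = (C - A) * u by ring,
    show 1 - (1 - C * u) * (1 - A * u) = u * (A + C - A * C * u) by ring]
  field_simp
  ring

lemma tendsto_add_inv_add_div_pow_exp (A σ : ℝ) (hσ : 2 + σ ≠ 0) :
    Tendsto (fun L : ℕ => (((1 - A / √L) + (1 - A / √L)⁻¹ + σ) / (2 + σ)) ^ L)
      atTop (𝓝 (exp (A ^ 2 / (2 + σ)))) := by
  have hρ : Tendsto (fun L : ℕ => 1 - A / √L) atTop (𝓝 1) := by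
    simpa using tendsto_const_nhds.sub <| tendsto_const_nhds.div_atTop <|
      tendsto_sqrt_atTop.comp tendsto_natCast_atTop_atTop
  have hlim : Tendsto (fun L : ℕ => A ^ 2 / ((2 + σ) * (1 - A / √L))) atTop
      (𝓝 (A ^ 2 / (2 + σ))) := by
    have h := (tendsto_const_nhds (x := A ^ 2)).div (tendsto_const_nhds.mul hρ) (by simpa using hσ)
    rwa [mul_one] at h
  have hmul : Tendsto (fun L : ℕ => L * ((1 - A / √L - 1) ^ 2 / ((2 + σ) * (1 - A / √L))))
      atTop (𝓝 (A ^ 2 / (2 + σ))) := by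
    refine hlim.congr' ?_
    filter_upwards [eventually_ne_atTop 0] with L hL
    rw [sub_sub_cancel_left, neg_sq, div_pow, sq_sqrt (Nat.cast_nonneg L)]
    field_simp
  refine (tendsto_one_add_pow_exp_of_tendsto hmul).congr' ?_
  filter_upwards [hρ.eventually_ne one_ne_zero] with L hL
  congr 1
  field_simp
  ring

theorem statement7 (σ A C : ℝ) (hσ : 0 < σ) (hA : A < 0) (hAC : 0 < A + C) :
    Tendsto
      (fun L : ℕ =>
        (((1 - A / Real.sqrt L) - (1 - A / Real.sqrt L)⁻¹) *
            ((1 - A / Real.sqrt L) + (1 - A / Real.sqrt L)⁻¹ + σ) ^ L /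
            (((1 - A / Real.sqrt L) - (1 - C / Real.sqrt L)) *
              (1 - (1 - C / Real.sqrt L) * (1 - A / Real.sqrt L)))) /
          ((2 + σ) ^ L * Real.sqrt L))
      atTop
      (𝓝 (2 * A * Real.exp (A ^ 2 / (2 + σ)) / (A ^ 2 - C ^ 2))) := by
  have hu : Tendsto (fun L : ℕ => (√L)⁻¹) atTop (𝓝[>] 0) :=
    tendsto_inv_atTop_nhdsGT_zero.comp (tendsto_sqrt_atTop.comp tendsto_natCast_atTop_atTop)
  have hpre := (tendsto_prefactor_nhdsGT_zero (by linarith : A < C).ne hAC.ne').comp hu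
  have hpow := tendsto_add_inv_add_div_pow_exp A σ (by linarith)
  convert hpre.mul hpow using 1
  · funext L
    simp only [Function.comp, div_eq_mul_inv, mul_pow, inv_pow]
    ring
  · rw [div_mul_eq_mul_div]
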